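/- With notation as above, the subgroup G_K is normal in G⁰(2) if and only if K contains the commutator subgroup [G⁰, G⁰] and all elements of the form g·Ad_{τ'}(g) for g ∈ G⁰. -/
import Mathlib


open Subgroup

/-- The swap automorphism of `G × G`. -/
def swapAut (G : Type*) [Group G] : MulAut (G × G) :=
  (MulEquiv.prodComm : G × G ≃* G × G)

/-- The order-two subgroup of `MulAut (G × G)` generated by the swap. -/
abbrev swapZ2 (G : Type*) [Group G] : Subgroup (MulAut (G × G)) :=
  Subgroup.zpowers (swapAut G)

/-- The group `G(2) = (G × G) ⋊ ℤ/2ℤ` (with the swap action). -/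
abbrev Gtwo (G : Type*) [Group G] :=
  SemidirectProduct (G × G) (swapZ2 G) (swapZ2 G).subtype

/-- The element `σ` of `G(2)`. -/
def sigmaW (G : Type*) [Group G] : Gtwo G :=
  ⟨1, ⟨swapAut G, Subgroup.mem_zpowers _⟩⟩

open Classical in
/-- The embedding of `G` into `G(2)` determined by `G0` and `τ'`:
`g ↦ ((g, τ'gτ'⁻¹), 1)` for `g ∈ G0`, and `τ' ↦ σ·((τ'², 1), 1)`. -/
noncomputable def iota {G : Type*} [Group G] (G0 : Subgroup G) (τ' : G) (g : G) : Gtwo G :=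
  if g ∈ G0 then ⟨(g, τ' * g * τ'⁻¹), 1⟩
  else ⟨(g * τ', τ' * g * τ'⁻¹ * τ'⁻¹), ⟨swapAut G, Subgroup.mem_zpowers _⟩⟩

lemma swapAut_sq (G : Type*) [Group G] : swapAut G ^ 2 = 1 := by
  rw [sq]; ext x <;> rfl

lemma swapZ2_cases {G : Type*} [Group G] (s : swapZ2 G) :
    (s : MulAut (G × G)) = 1 ∨ (s : MulAut (G × G)) = swapAut G := by
  obtain ⟨u, hu⟩ := s
  obtain ⟨k, rfl⟩ := Subgroup.mem_zpowers_iff.mp hu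
  have h2 : swapAut G ^ (2 : ℤ) = 1 := by
    rw [show (2 : ℤ) = ((2 : ℕ) : ℤ) from rfl, zpow_natCast, swapAut_sq]
  rcases Int.even_or_odd k with ⟨m, rfl⟩ | ⟨m, rfl⟩
  · left
    show swapAut G ^ (m + m) = 1
    rw [← two_mul, zpow_mul, h2, one_zpow]
  · right
    show swapAut G ^ (2 * m + 1) = swapAut G
    rw [zpow_add, zpow_mul, h2, one_zpow, one_mul, zpow_one]

/-- The subgroup `(G⁰ × G⁰) ⋊ ℤ/2ℤ` of `G(2)`. -/
def G0two {G : Type*} [Group G] (G0 : Subgroup G) : Subgroup (Gtwo G) where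
  carrier := {x | x.left.1 ∈ G0 ∧ x.left.2 ∈ G0}
  one_mem' := ⟨G0.one_mem, G0.one_mem⟩
  mul_mem' := by
    rintro x y ⟨hx1, hx2⟩ ⟨hy1, hy2⟩
    have h : (x * y).left = x.left * (x.right : MulAut (G × G)) y.left := rfl
    rcases swapZ2_cases x.right with hs | hs <;>
      · show ((x*y).left).1 ∈ G0 ∧ ((x*y).left).2 ∈ G0
        rw [h, hs]
        first
        | exact ⟨G0.mul_mem hx1 hy1, G0.mul_mem hx2 hy2⟩
        | exact ⟨G0.mul_mem hx1 hy2, G0.mul_mem hx2 hy1⟩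
  inv_mem' := by
    rintro x ⟨hx1, hx2⟩
    have h : (x⁻¹).left = ((x.right⁻¹ : swapZ2 G) : MulAut (G × G)) x.left⁻¹ := rfl
    rcases swapZ2_cases x.right⁻¹ with hs | hs <;>
      · show ((x⁻¹).left).1 ∈ G0 ∧ ((x⁻¹).left).2 ∈ G0
        rw [h, hs]
        first
        | exact ⟨G0.inv_mem hx1, G0.inv_mem hx2⟩
        | exact ⟨G0.inv_mem hx2, G0.inv_mem hx1⟩

/-- The set `G⁰_K = {(g,h) ∈ G⁰ × G⁰ : h·(τ'gτ'⁻¹)⁻¹ ∈ K}`, seen inside `G(2)`. -/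
def G0Kset {G : Type*} [Group G] (G0 : Subgroup G) (τ' : G) (K : Subgroup G) :
    Set (Gtwo G) :=
  {x | x.right = 1 ∧ x.left.1 ∈ G0 ∧ x.left.2 ∈ G0 ∧
    x.left.2 * (τ' * x.left.1 * τ'⁻¹)⁻¹ ∈ K}

/-- The set `G_K = G⁰_K ∪ τ'·G⁰_K` inside `G(2)`. -/
noncomputable def GKset {G : Type*} [Group G] (G0 : Subgroup G) (τ' : G) (K : Subgroup G) :
    Set (Gtwo G) :=
  G0Kset G0 τ' K ∪ (fun x => iota G0 τ' τ' * x) '' G0Kset G0 τ' K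


section Aux

variable {G : Type*} [Group G]

/-- The element `σ` of `swapZ2 G`. -/
def sigmaEl (G : Type*) [Group G] : swapZ2 G :=
  ⟨swapAut G, Subgroup.mem_zpowers _⟩

lemma swapAut_apply (p : G × G) : (swapAut G) p = (p.2, p.1) := rfl

lemma swapAut_inv : (swapAut G)⁻¹ = swapAut G := by
  rw [inv_eq_iff_mul_eq_one, ← sq, swapAut_sq]

lemma sigmaEl_inv : (sigmaEl G)⁻¹ = sigmaEl G := by
  apply Subtype.ext
  exact swapAut_inv

lemma coe_one_swapZ2 : ((1 : swapZ2 G) : MulAut (G × G)) = 1 := rfl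

lemma coe_sigmaEl : ((sigmaEl G : swapZ2 G) : MulAut (G × G)) = swapAut G := rfl

lemma mk_mul_mk (l₁ l₂ : G × G) (r₁ r₂ : swapZ2 G) :
    (⟨l₁, r₁⟩ : Gtwo G) * ⟨l₂, r₂⟩ = ⟨l₁ * (r₁ : MulAut (G × G)) l₂, r₁ * r₂⟩ := rfl

lemma mk_inv (l : G × G) (r : swapZ2 G) :
    (⟨l, r⟩ : Gtwo G)⁻¹ = ⟨((r⁻¹ : swapZ2 G) : MulAut (G × G)) l⁻¹, r⁻¹⟩ := rfl

lemma iota_tau_spec (G0 : Subgroup G) {τ' : G} (hτ : τ' ∉ G0) :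
    iota G0 τ' τ' = ⟨(τ' * τ', 1), sigmaEl G⟩ := by
  unfold iota
  rw [if_neg hτ]
  exact SemidirectProduct.ext (Prod.ext rfl (by group)) rfl

lemma iota_mul_mk (G0 : Subgroup G) {τ' : G} (hτ : τ' ∉ G0) (l : G × G) (r : swapZ2 G) :
    iota G0 τ' τ' * (⟨l, r⟩ : Gtwo G) = ⟨(τ' * τ' * l.2, l.1), sigmaEl G * r⟩ := by
  rw [iota_tau_spec G0 hτ, mk_mul_mk, coe_sigmaEl, swapAut_apply]
  exact SemidirectProduct.ext (by rw [Prod.mk_mul_mk, one_mul]) rfl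

lemma mem_GKset_iff (G0 : Subgroup G) {τ' : G} (K : Subgroup G) (hτ : τ' ∉ G0) (x : Gtwo G) :
    x ∈ GKset G0 τ' K ↔
      (x.right = 1 ∧ x.left.1 ∈ G0 ∧ x.left.2 ∈ G0 ∧
        x.left.2 * (τ' * x.left.1 * τ'⁻¹)⁻¹ ∈ K) ∨
      (∃ g h : G, g ∈ G0 ∧ h ∈ G0 ∧ h * (τ' * g * τ'⁻¹)⁻¹ ∈ K ∧
        x = ⟨(τ' * τ' * h, g), sigmaEl G⟩) := by
  constructor
  · rintro (hx | ⟨y, hy, rfl⟩)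
    · exact Or.inl hx
    · obtain ⟨h1, h2, h3, h4⟩ := hy
      refine Or.inr ⟨y.left.1, y.left.2, h2, h3, h4, ?_⟩
      have hy1 : y = ⟨(y.left.1, y.left.2), y.right⟩ := rfl
      show iota G0 τ' τ' * y = _
      rw [hy1, h1, iota_mul_mk G0 hτ, mul_one]
  · rintro (hx | ⟨g, h, hg, hh, hK, rfl⟩)
    · exact Or.inl hx
    · refine Or.inr ⟨⟨(g, h), 1⟩, ⟨rfl, hg, hh, hK⟩, ?_⟩
      show iota G0 τ' τ' * _ = _
      rw [iota_mul_mk G0 hτ, mul_one]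

lemma sigmaEl_sq : sigmaEl G * sigmaEl G = 1 := by
  apply Subtype.ext
  show swapAut G * swapAut G = 1
  rw [← sq]; exact swapAut_sq G

lemma conj_one_one (la lx : G × G) :
    (⟨la, 1⟩ : Gtwo G) * ⟨lx, 1⟩ * (⟨la, 1⟩ : Gtwo G)⁻¹ = ⟨la * lx * la⁻¹, 1⟩ := by
  rw [mk_inv, mk_mul_mk, mk_mul_mk]
  simp only [inv_one, coe_one_swapZ2, MulAut.one_apply, mul_one, one_mul]

lemma conj_one_sigma (la lx : G × G) :
    (⟨la, 1⟩ : Gtwo G) * ⟨lx, sigmaEl G⟩ * (⟨la, 1⟩ : Gtwo G)⁻¹ =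
      ⟨la * lx * ((la⁻¹).2, (la⁻¹).1), sigmaEl G⟩ := by
  rw [mk_inv, mk_mul_mk, mk_mul_mk]
  simp only [inv_one, coe_one_swapZ2, MulAut.one_apply, coe_sigmaEl, swapAut_apply,
    mul_one, one_mul]

lemma conj_sigma_one (la lx : G × G) :
    (⟨la, sigmaEl G⟩ : Gtwo G) * ⟨lx, 1⟩ * (⟨la, sigmaEl G⟩ : Gtwo G)⁻¹ =
      ⟨la * (lx.2, lx.1) * la⁻¹, 1⟩ := by
  rw [mk_inv, mk_mul_mk, mk_mul_mk, sigmaEl_inv]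
  simp only [coe_sigmaEl, swapAut_apply, mul_one, one_mul, sigmaEl_sq, Prod.mk.eta]

lemma conj_sigma_sigma (la lx : G × G) :
    (⟨la, sigmaEl G⟩ : Gtwo G) * ⟨lx, sigmaEl G⟩ * (⟨la, sigmaEl G⟩ : Gtwo G)⁻¹ =
      ⟨la * (lx.2, lx.1) * ((la⁻¹).2, (la⁻¹).1), sigmaEl G⟩ := by
  rw [mk_inv, mk_mul_mk, mk_mul_mk, sigmaEl_inv]
  simp only [coe_sigmaEl, swapAut_apply, sigmaEl_sq, coe_one_swapZ2, MulAut.one_apply,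
    mul_one, one_mul]

lemma mem_G0two (G0 : Subgroup G) (x : Gtwo G) :
    x ∈ G0two G0 ↔ x.left.1 ∈ G0 ∧ x.left.2 ∈ G0 := Iff.rfl

end Aux

/-- `G_K` is normal in `G⁰(2)` iff `K` contains the commutator subgroup
`[G⁰,G⁰]` and all elements `g·Ad_{τ'}(g)` for `g ∈ G⁰`. -/
theorem statement6 {G : Type*} [Group G] [Finite G] (G0 : Subgroup G)
    (hind : G0.index = 2) (τ' : G) (hτ : τ' ∉ G0)
    (K : Subgroup G) (hKle : K ≤ G0) (hKn : K.Normal)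
    (GK : Subgroup (Gtwo G)) (hGK : (GK : Set (Gtwo G)) = GKset G0 τ' K)
    (hGKle : GK ≤ G0two G0) :
    (GK.subgroupOf (G0two G0)).Normal ↔
      ((∀ a ∈ G0, ∀ b ∈ G0, a * b * a⁻¹ * b⁻¹ ∈ K) ∧
       (∀ g ∈ G0, g * (τ' * g * τ'⁻¹) ∈ K)) := by
  have hτne : τ' ≠ 1 := fun h => hτ (h ▸ G0.one_mem)
  have hσne : sigmaEl G ≠ 1 := by
    intro h
    have h2 := congrArg (fun s => ((s : swapZ2 G) : MulAut (G × G)) (τ', (1 : G))) h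
    simp only [coe_sigmaEl, swapAut_apply, coe_one_swapZ2, MulAut.one_apply] at h2
    exact hτne (congrArg Prod.snd h2)
  have hττ : τ' * τ' ∈ G0 := Subgroup.mul_self_mem_of_index_two hind τ'
  have hτinv : τ'⁻¹ ∉ G0 := fun h => hτ (by simpa using G0.inv_mem h)
  have hτconj : ∀ g ∈ G0, τ' * g * τ'⁻¹ ∈ G0 := by
    intro g hg
    have h1 : τ' * g ∉ G0 := fun h => hτ (by simpa using G0.mul_mem h (G0.inv_mem hg))
    rw [Subgroup.mul_mem_iff_of_index_two hind]
    exact iff_of_false h1 hτinv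
  constructor
  · intro hN
    have conjGK : ∀ x ∈ GK, ∀ y, y ∈ G0two G0 → y * x * y⁻¹ ∈ GK := by
      intro x hx y hy
      have h1 : (⟨x, hGKle hx⟩ : G0two G0) ∈ GK.subgroupOf (G0two G0) := by
        rwa [Subgroup.mem_subgroupOf]
      have h2 := hN.conj_mem _ h1 ⟨y, hy⟩
      rwa [Subgroup.mem_subgroupOf] at h2
    constructor
    · intro a ha b hb
      have hx : (⟨(a, τ' * a * τ'⁻¹), 1⟩ : Gtwo G) ∈ GK := by
        rw [← SetLike.mem_coe, hGK]
        rw [mem_GKset_iff G0 K hτ]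
        refine Or.inl ⟨rfl, ha, hτconj a ha, ?_⟩
        show (τ' * a * τ'⁻¹) * (τ' * a * τ'⁻¹)⁻¹ ∈ K
        rw [mul_inv_cancel]; exact K.one_mem
      have hy : (⟨(b, 1), 1⟩ : Gtwo G) ∈ G0two G0 := ⟨hb, G0.one_mem⟩
      have hz := conjGK _ hx _ hy
      rw [conj_one_one, ← SetLike.mem_coe, hGK, mem_GKset_iff G0 K hτ] at hz
      rcases hz with ⟨_, _, _, hc⟩ | ⟨g, h, hg, hh, hc, heq⟩
      · simp only [Prod.mk_mul_mk, Prod.inv_mk, one_mul, mul_one, inv_one] at hc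
        have key := hKn.conj_mem _ hc τ'⁻¹
        have e : a * b * a⁻¹ * b⁻¹ =
            τ'⁻¹ * ((τ' * a * τ'⁻¹) * (τ' * (b * a * b⁻¹) * τ'⁻¹)⁻¹) * τ'⁻¹⁻¹ := by
          group
        rw [e]; exact key
      · exact absurd (congrArg SemidirectProduct.right heq).symm hσne
    · intro g hg
      have hx : iota G0 τ' τ' ∈ GK := by
        rw [← SetLike.mem_coe, hGK, mem_GKset_iff G0 K hτ]
        refine Or.inr ⟨1, 1, G0.one_mem, G0.one_mem, by simpa using K.one_mem, ?_⟩
        rw [iota_tau_spec G0 hτ]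
        exact SemidirectProduct.ext (Prod.ext (by group) rfl) rfl
      have hy : (⟨((1 : G), g⁻¹), 1⟩ : Gtwo G) ∈ G0two G0 := ⟨G0.one_mem, G0.inv_mem hg⟩
      have hz := conjGK _ hx _ hy
      rw [iota_tau_spec G0 hτ, conj_one_sigma, ← SetLike.mem_coe, hGK,
        mem_GKset_iff G0 K hτ] at hz
      rcases hz with ⟨habs, _⟩ | ⟨g', h', hg', hh', hc, heq⟩
      · exact absurd habs hσne
      · have eL := congrArg SemidirectProduct.left heq
        have e1 := congrArg Prod.fst eL
        have e2 := congrArg Prod.snd eL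
        simp only [Prod.mk_mul_mk, Prod.inv_mk, one_mul, mul_one, inv_one] at e1 e2
        have hh'' : h' = g := by
          have e3 : τ' * τ' * h' = τ' * τ' * g := by rw [← e1]; group
          exact (mul_left_cancel e3)
        have hg'' : g' = g⁻¹ := by rw [← e2]
        rw [hh'', hg''] at hc
        have e : g * (τ' * g * τ'⁻¹) = g * (τ' * g⁻¹ * τ'⁻¹)⁻¹ := by group
        rw [e]; exact hc
  · rintro ⟨ha, hb⟩
    have hgK : ∀ g ∈ G0, (τ' * g * τ'⁻¹) * g ∈ K := by
      intro g hg
      have h2 := hKn.conj_mem _ (hb g hg) g⁻¹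
      have e : g⁻¹ * (g * (τ' * g * τ'⁻¹)) * g⁻¹⁻¹ = (τ' * g * τ'⁻¹) * g := by group
      rwa [e] at h2
    have conv : ∀ g ∈ G0, ∀ h : G, (h * (τ' * g * τ'⁻¹)⁻¹ ∈ K ↔ h * g ∈ K) := by
      intro g hg h
      constructor
      · intro h1
        have e : h * g = (h * (τ' * g * τ'⁻¹)⁻¹) * ((τ' * g * τ'⁻¹) * g) := by group
        rw [e]; exact K.mul_mem h1 (hgK g hg)
      · intro h1
        have e : h * (τ' * g * τ'⁻¹)⁻¹ = (h * g) * ((τ' * g * τ'⁻¹) * g)⁻¹ := by group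
        rw [e]; exact K.mul_mem h1 (K.inv_mem (hgK g hg))
    have swapK : ∀ u v : G, u * v ∈ K → v * u ∈ K := by
      intro u v huv
      have h2 := hKn.conj_mem _ huv u⁻¹
      have e : u⁻¹ * (u * v) * u⁻¹⁻¹ = v * u := by group
      rwa [e] at h2
    have key1 : ∀ a p b q : G, a ∈ G0 → p ∈ G0 → b ∈ G0 → q ∈ G0 → q * p ∈ K →
        (b * q * b⁻¹) * (a * p * a⁻¹) ∈ K := by
      intro a p b q ha' hp hb' hq hqp
      have e : (b * q * b⁻¹) * (a * p * a⁻¹)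
          = (b * q * b⁻¹ * q⁻¹) * (q * (a * p * a⁻¹ * p⁻¹) * q⁻¹) * (q * p) := by group
      rw [e]
      exact K.mul_mem (K.mul_mem (ha b hb' q hq) (hKn.conj_mem _ (ha a ha' p hp) q)) hqp
    have main : ∀ x ∈ GKset G0 τ' K, ∀ y : Gtwo G,
        y.left.1 ∈ G0 → y.left.2 ∈ G0 → y * x * y⁻¹ ∈ GKset G0 τ' K := by
      intro x hx y hy1 hy2
      obtain ⟨⟨a, b⟩, t⟩ := y
      have ha' : a ∈ G0 := hy1
      have hb' : b ∈ G0 := hy2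
      rw [mem_GKset_iff G0 K hτ] at hx
      have ht := swapZ2_cases t
      rcases hx with ⟨hxr, hp, hq, hc⟩ | ⟨g, h, hg, hh, hc, rfl⟩
      · obtain ⟨⟨p, q⟩, s⟩ := x
        have hp' : p ∈ G0 := hp
        have hq' : q ∈ G0 := hq
        have hs : s = 1 := hxr
        subst hs
        have hc' : q * p ∈ K := (conv p hp' q).mp hc
        rcases ht with ht | ht
        · have ht1 : t = 1 := Subtype.ext ht
          subst ht1
          rw [conj_one_one, mem_GKset_iff G0 K hτ]
          left
          simp only [Prod.mk_mul_mk, Prod.inv_mk]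
          refine ⟨trivial, G0.mul_mem (G0.mul_mem ha' hp') (G0.inv_mem ha'),
            G0.mul_mem (G0.mul_mem hb' hq') (G0.inv_mem hb'), ?_⟩
          rw [conv _ (G0.mul_mem (G0.mul_mem ha' hp') (G0.inv_mem ha'))]
          exact key1 a p b q ha' hp' hb' hq' hc'
        · have ht1 : t = sigmaEl G := Subtype.ext ht
          subst ht1
          rw [conj_sigma_one, mem_GKset_iff G0 K hτ]
          left
          simp only [Prod.mk_mul_mk, Prod.inv_mk]
          refine ⟨trivial, G0.mul_mem (G0.mul_mem ha' hq') (G0.inv_mem ha'),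
            G0.mul_mem (G0.mul_mem hb' hp') (G0.inv_mem hb'), ?_⟩
          rw [conv _ (G0.mul_mem (G0.mul_mem ha' hq') (G0.inv_mem ha'))]
          exact key1 a q b p ha' hq' hb' hp' (swapK q p hc')
      · have hc' : h * g ∈ K := (conv g hg h).mp hc
        rcases ht with ht | ht
        · have ht1 : t = 1 := Subtype.ext ht
          subst ht1
          rw [conj_one_sigma, mem_GKset_iff G0 K hτ]
          right
          simp only [Prod.mk_mul_mk, Prod.inv_mk]
          refine ⟨b * g * a⁻¹, (τ' * τ')⁻¹ * (a * (τ' * τ' * h) * b⁻¹),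
            G0.mul_mem (G0.mul_mem hb' hg) (G0.inv_mem ha'),
            G0.mul_mem (G0.inv_mem hττ) (G0.mul_mem (G0.mul_mem ha'
              (G0.mul_mem hττ hh)) (G0.inv_mem hb')), ?_, ?_⟩
          · rw [conv _ (G0.mul_mem (G0.mul_mem hb' hg) (G0.inv_mem ha'))]
            have e : ((τ' * τ')⁻¹ * (a * (τ' * τ' * h) * b⁻¹)) * (b * g * a⁻¹)
                = ((τ' * τ')⁻¹ * a * ((τ' * τ')⁻¹)⁻¹ * a⁻¹) * (a * (h * g) * a⁻¹) := by
              generalize τ' * τ' = T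
              group
            rw [e]
            exact K.mul_mem (ha _ (G0.inv_mem hττ) _ ha') (hKn.conj_mem _ hc' a)
          · exact SemidirectProduct.ext (Prod.ext (by group) rfl) rfl
        · have ht1 : t = sigmaEl G := Subtype.ext ht
          subst ht1
          rw [conj_sigma_sigma, mem_GKset_iff G0 K hτ]
          right
          simp only [Prod.mk_mul_mk, Prod.inv_mk]
          refine ⟨b * (τ' * τ' * h) * a⁻¹, (τ' * τ')⁻¹ * (a * g * b⁻¹),
            G0.mul_mem (G0.mul_mem hb' (G0.mul_mem hττ hh)) (G0.inv_mem ha'),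
            G0.mul_mem (G0.inv_mem hττ) (G0.mul_mem (G0.mul_mem ha' hg)
              (G0.inv_mem hb')), ?_, ?_⟩
          · rw [conv _ (G0.mul_mem (G0.mul_mem hb' (G0.mul_mem hττ hh)) (G0.inv_mem ha'))]
            have e : ((τ' * τ')⁻¹ * (a * g * b⁻¹)) * (b * (τ' * τ' * h) * a⁻¹)
                = ((τ' * τ')⁻¹ * (a * g) * ((τ' * τ')⁻¹)⁻¹ * (a * g)⁻¹)
                  * (a * (g * h) * a⁻¹) := by
              generalize τ' * τ' = T
              group
            rw [e]
            exact K.mul_mem (ha _ (G0.inv_mem hττ) _ (G0.mul_mem ha' hg))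
              (hKn.conj_mem _ (swapK h g hc') a)
          · exact SemidirectProduct.ext (Prod.ext (by group) rfl) rfl
    constructor
    intro n hn yH
    rw [Subgroup.mem_subgroupOf] at hn ⊢
    rw [← SetLike.mem_coe, hGK] at hn ⊢
    have hyH := yH.2
    rw [mem_G0two] at hyH
    exact main _ hn (yH : Gtwo G) hyH.1 hyH.2
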